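/- arXiv:1403.1834 — 5 statements merged into one kernel-verified Lean document; each statement's English description precedes it below -/
import Mathlib

section
/- Let R be a noncommutative ring containing an invertible central element q, and let x, y ∈ R satisfy x·y = q²·y·x. Then for every n ≥ 0, (x + y)^n = Σ_{k=0}^{n} qbinom(n,k) · q^{k(n-k)} · y^k · x^{n-k}, where qbinom(n,k) is the symmetric Gaussian binomial coefficient (q-binomial with [n] = (q^n - q^{-n})/(q - q^{-1})). (This is the q-binomial theorem underlying the q-exponential factorization e_q(y)e_q(x) = e_q(x+y).) -/
/-!
Put `g n k = qbinom q n k * q ^ (k * (n - k))`. Since `q` is central, the recursion defining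
`qbinom` turns into the Pascal rule `g (n+1) (k+1) = g n (k+1) + g n k * (q²) ^ (n - k)` of the
ordinary Gaussian binomials in `q²`; this is an identity between central elements, so it is
checked in the commutative ring `Subring.center R`. On the other side,
`x ^ m * y = q ^ (2m) * y * x ^ m`, so multiplying the expansion of `(x + y) ^ n` by `x + y`
on the right produces exactly this recursion for the coefficient of `y ^ k * x ^ (n - k)`.
-/

def qbinom {R : Type*} [Ring R] (q : Rˣ) : ℕ → ℕ → R
  | _, 0 => 1
  | 0, _ + 1 => 0
  | n + 1, k + 1 => ((q⁻¹ : Rˣ) : R) ^ (k + 1) * qbinom q n (k + 1)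
      + ((q : R)) ^ (n - k) * qbinom q n k

theorem qbinom_eq_zero_of_lt {R : Type*} [Ring R] (q : Rˣ) {n k : ℕ} (h : n < k) :
    qbinom q n k = 0 := by
  induction n generalizing k with
  | zero => obtain ⟨k, rfl⟩ := Nat.exists_eq_succ_of_ne_zero h.ne'; rfl
  | succ n ih =>
    obtain ⟨k, rfl⟩ := Nat.exists_eq_succ_of_ne_zero (Nat.zero_lt_of_lt h).ne'
    simp only [qbinom, ih (by omega : n < k + 1), ih (by omega : n < k), mul_zero, add_zero]

theorem map_qbinom {R S : Type*} [Ring R] [Ring S] (f : R →+* S) (q : Rˣ) (n k : ℕ) :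
    f (qbinom q n k) = qbinom (Units.map (f : R →* S) q) n k := by
  induction n generalizing k with
  | zero => cases k <;> simp [qbinom]
  | succ n ih => cases k <;> simp [qbinom, ih]

theorem qbinom_mul_pow_succ_succ_of_comm {S : Type*} [CommRing S] (q : Sˣ) {n k : ℕ}
    (hk : k ≤ n) :
    qbinom q (n + 1) (k + 1) * (q : S) ^ ((k + 1) * (n - k)) =
      qbinom q n (k + 1) * (q : S) ^ ((k + 1) * (n - (k + 1)))
        + qbinom q n k * (q : S) ^ (k * (n - k)) * ((q : S) ^ 2) ^ (n - k) := by
  obtain ⟨m, rfl⟩ := Nat.exists_eq_add_of_le hk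
  have hinv : ((q⁻¹ : Sˣ) : S) ^ (k + 1) * (q : S) ^ (k + 1) = 1 := by
    rw [← mul_pow, Units.inv_mul, one_pow]
  rcases m with _ | m
  · simp [qbinom, qbinom_eq_zero_of_lt q (Nat.lt_succ_self k)]
  · rw [qbinom, show k + (m + 1) - k = m + 1 by omega, show k + (m + 1) - (k + 1) = m by omega]
    linear_combination qbinom q (k + (m + 1)) (k + 1) * (q : S) ^ ((k + 1) * m) * hinv

theorem qbinom_mul_pow_succ_succ {R : Type*} [Ring R] (q : Rˣ)
    (hq : (q : R) ∈ Subring.center R) {n k : ℕ} (hk : k ≤ n) :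
    qbinom q (n + 1) (k + 1) * (q : R) ^ ((k + 1) * (n - k)) =
      qbinom q n (k + 1) * (q : R) ^ ((k + 1) * (n - (k + 1)))
        + qbinom q n k * (q : R) ^ (k * (n - k)) * ((q : R) ^ 2) ^ (n - k) := by
  let u : (Subring.center R)ˣ :=
    ⟨⟨q, hq⟩, ⟨_, Set.units_inv_mem_center hq⟩,
      Subtype.ext q.mul_inv, Subtype.ext q.inv_mul⟩
  have hu : Units.map ((Subring.center R).subtype : Subring.center R →* R) u = q := Units.ext rfl
  have := congrArg (Subring.center R).subtype (qbinom_mul_pow_succ_succ_of_comm u hk)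
  simp only [map_add, map_mul, map_pow, map_qbinom, hu] at this
  exact this

theorem pow_mul_eq_of_mul_eq {M : Type*} [Monoid M] {c x y : M} (hcx : Commute c x)
    (hxy : x * y = c * y * x) (m : ℕ) : x ^ m * y = c ^ m * y * x ^ m := by
  induction m with
  | zero => simp
  | succ m ih =>
    calc x ^ (m + 1) * y = x ^ m * (c * y * x) := by rw [pow_succ, mul_assoc, hxy]
      _ = c * (x ^ m * y) * x := by
          rw [← mul_assoc, ← mul_assoc, ← (hcx.pow_right m).eq, mul_assoc c]
      _ = c ^ (m + 1) * y * x ^ (m + 1) := by rw [ih, pow_succ', pow_succ]; simp only [mul_assoc]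

theorem add_pow_eq_sum_of_mul_eq {R : Type*} [Ring R] {c x y : R} (hcx : Commute c x)
    (hcy : Commute c y) (hxy : x * y = c * y * x) (g : ℕ → ℕ → R) (h0 : ∀ n, g n 0 = 1)
    (htop : ∀ n, g n (n + 1) = 0)
    (hstep : ∀ n k, k ≤ n → g (n + 1) (k + 1) = g n (k + 1) + g n k * c ^ (n - k)) (n : ℕ) :
    (x + y) ^ n = ∑ k ∈ Finset.range (n + 1), g n k * y ^ k * x ^ (n - k) := by
  induction n with
  | zero => simp [h0]
  | succ n ih =>
    have mul_x : ∀ k ∈ Finset.range (n + 1),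
        g n k * y ^ k * x ^ (n - k) * x = g n k * y ^ k * x ^ (n + 1 - k) := fun k hk => by
      rw [mul_assoc, ← pow_succ, Nat.sub_add_comm (Finset.mem_range_succ_iff.mp hk)]
    have mul_y : ∀ k, g n k * y ^ k * x ^ (n - k) * y
        = g n k * c ^ (n - k) * y ^ (k + 1) * x ^ (n - k) := fun k => by
      calc g n k * y ^ k * x ^ (n - k) * y
            = g n k * (y ^ k * c ^ (n - k)) * y * x ^ (n - k) := by
            rw [mul_assoc _ (x ^ _), pow_mul_eq_of_mul_eq hcx hxy]; simp only [mul_assoc]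
        _ = g n k * c ^ (n - k) * y ^ (k + 1) * x ^ (n - k) := by
            rw [← ((hcy.pow_left _).pow_right k).eq, pow_succ]; simp only [mul_assoc]
    have shift : ∑ k ∈ Finset.range (n + 1), g n k * y ^ k * x ^ (n + 1 - k) =
        ∑ k ∈ Finset.range (n + 1), g n (k + 1) * y ^ (k + 1) * x ^ (n - k) + x ^ (n + 1) := by
      rw [Finset.sum_range_succ', Finset.sum_range_succ _ n, htop]
      simp [h0, Nat.add_sub_add_right]
    calc (x + y) ^ (n + 1)
        = ∑ k ∈ Finset.range (n + 1), g n k * y ^ k * x ^ (n - k) * x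
          + ∑ k ∈ Finset.range (n + 1), g n k * y ^ k * x ^ (n - k) * y := by
          rw [pow_succ, ih, mul_add, Finset.sum_mul, Finset.sum_mul]
      _ = ∑ k ∈ Finset.range (n + 1),
              (g n (k + 1) + g n k * c ^ (n - k)) * y ^ (k + 1) * x ^ (n - k) + x ^ (n + 1) := by
          rw [Finset.sum_congr rfl mul_x, shift, Finset.sum_congr rfl fun k _ => mul_y k]
          simp only [add_mul, Finset.sum_add_distrib]
          abel
      _ = ∑ k ∈ Finset.range (n + 2), g (n + 1) k * y ^ k * x ^ (n + 1 - k) := by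
          rw [Finset.sum_range_succ' _ (n + 1)]
          refine congrArg₂ (· + ·) (Finset.sum_congr rfl fun k hk => ?_) (by simp [h0])
          rw [hstep n k (Finset.mem_range_succ_iff.mp hk), Nat.add_sub_add_right]

/-- **q-binomial theorem.** If `q` is a central invertible element of a ring `R`
and `x y : R` satisfy `x * y = q² * y * x`, then
`(x + y)^n = Σ_{k=0}^n qbinom(n,k) q^{k(n-k)} y^k x^{n-k}`. -/
theorem q_binomial_theorem {R : Type*} [Ring R] (q : Rˣ)
    (hq : ∀ a : R, (q : R) * a = a * (q : R))
    (x y : R) (hxy : x * y = (q : R) ^ 2 * y * x) (n : ℕ) :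
    (x + y) ^ n =
      ∑ k ∈ Finset.range (n + 1),
        qbinom q n k * (q : R) ^ (k * (n - k)) * y ^ k * x ^ (n - k) := by
  have hq_center : (q : R) ∈ Subring.center R := Subring.mem_center_iff.mpr fun a => (hq a).symm
  have hq_comm : ∀ a : R, Commute ((q : R) ^ 2) a := fun a =>
    (show Commute (q : R) a from hq a).pow_left 2
  exact add_pow_eq_sum_of_mul_eq (hq_comm x) (hq_comm y) hxy
    (fun n k => qbinom q n k * (q : R) ^ (k * (n - k))) (fun n => by simp [qbinom])
    (fun n => by simp [qbinom_eq_zero_of_lt q (Nat.lt_succ_self n)])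
    (fun n k hk => by
      simpa only [Nat.add_sub_add_right] using qbinom_mul_pow_succ_succ q hq_center hk) n
end

section
/- Let R be a Q(q)-algebra (q transcendental) and x, y ∈ R with x·y = q²·y·x. Define the q-exponential e_q(z) = Σ_{n≥0} z^n q^{-n(n-1)/2}/[n]! as a formal power series in a formal variable t (replacing z by t·z), where [n]! = [1][2]⋯[n] with [n] = (q^n - q^{-n})/(q - q^{-1}). Then e_q(ty)·e_q(tx) = e_q(t(x+y)) as formal power series in t. -/
open scoped PowerSeries

noncomputable section

/-- The symmetric quantum integer `[n] = (q^n - q^{-n})/(q - q^{-1})` for `q = X` in `ℚ(q)`. -/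
def qInt (n : ℕ) : RatFunc ℚ :=
  ((RatFunc.X : RatFunc ℚ) ^ n - (RatFunc.X : RatFunc ℚ)⁻¹ ^ n) /
    ((RatFunc.X : RatFunc ℚ) - (RatFunc.X : RatFunc ℚ)⁻¹)

/-- The quantum factorial `[n]! = [1][2]⋯[n]`. -/
def qFact (n : ℕ) : RatFunc ℚ := ∏ k ∈ Finset.range n, qInt (k + 1)

/-- The q-exponential `e_q(t z) = Σ_{n ≥ 0} z^n q^{-n(n-1)/2}/[n]! · t^n`,
as a formal power series in `t` with coefficients in a `ℚ(q)`-algebra `A`. -/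
def qExp {A : Type*} [Ring A] [Algebra (RatFunc ℚ) A] (z : A) : PowerSeries A :=
  PowerSeries.mk fun n =>
    algebraMap (RatFunc ℚ) A ((RatFunc.X : RatFunc ℚ)⁻¹ ^ (n * (n - 1) / 2) / qFact n) * z ^ n

/-!
With `[n]_p = 1 + p + ⋯ + p^{n-1}` and `p = q²` we have `[k] = q^{-(k-1)} [k]_p`, so the
coefficient `q^{-n(n-1)/2}/[n]!` of `e_q` is `1/[n]_p!` and `e_q(tz) = ∑ zⁿ tⁿ / [n]_p!`.
Let `Sₙ = ∑_{i+j=n} yⁱ xʲ / ([i]_p! [j]_p!)` be the coefficient of `tⁿ` in `e_q(ty) e_q(tx)`.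
Moving `x` past `yⁱ` costs `pⁱ`, and `[i+j]_p = [i]_p + pⁱ [j]_p`; together these give
`[n+1]_p S_{n+1} = (x + y) Sₙ`, hence `Sₙ = (x + y)ⁿ / [n]_p!`.
-/

open Finset PowerSeries

section QNat

variable {S : Type*}

def qNat [Semiring S] (p : S) (n : ℕ) : S := ∑ i ∈ range n, p ^ i

def qFactorial [CommSemiring S] (p : S) (n : ℕ) : S := ∏ k ∈ range n, qNat p (k + 1)

@[simp]
lemma qNat_zero [Semiring S] (p : S) : qNat p 0 = 0 := sum_range_zero _

lemma qNat_add [Semiring S] (p : S) (a b : ℕ) :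
    qNat p (a + b) = qNat p a + p ^ a * qNat p b := by
  simp only [qNat, sum_range_add, pow_add, mul_sum]

lemma qNat_ne_zero [Ring S] {p : S} {n : ℕ} (hp : p ^ n ≠ 1) : qNat p n ≠ 0 := by
  intro h
  apply hp
  rw [← sub_eq_zero, ← geom_sum_mul, ← qNat, h, zero_mul]

lemma qFactorial_succ [CommSemiring S] (p : S) (n : ℕ) :
    qFactorial p (n + 1) = qFactorial p n * qNat p (n + 1) :=
  prod_range_succ _ n

lemma qNat_mul_inv_qFactorial_succ [Field S] {p : S} (hp : ∀ k, qNat p (k + 1) ≠ 0) (n : ℕ) :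
    qNat p (n + 1) * (qFactorial p (n + 1))⁻¹ = (qFactorial p n)⁻¹ := by
  rw [qFactorial_succ, mul_inv, mul_left_comm, mul_inv_cancel₀ (hp n), mul_one]

end QNat

section QBinomial

variable {S A : Type*} [Semiring A] {p : S} {x y : A}

lemma mul_pow_eq_smul_pow_mul [CommSemiring S] [Algebra S A] (hxy : x * y = p • (y * x))
    (i : ℕ) :
    x * y ^ i = p ^ i • (y ^ i * x) := by
  induction i with
  | zero => simp
  | succ i ih =>
    rw [pow_succ, ← mul_assoc, ih, smul_mul_assoc, mul_assoc, hxy, mul_smul_comm, smul_smul,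
      ← pow_succ, ← mul_assoc, ← pow_succ]

variable [Field S] [Algebra S A]

variable (p x y) in
def qExpProdCoeff (n : ℕ) : A :=
  ∑ ij ∈ antidiagonal n,
    ((qFactorial p ij.1)⁻¹ * (qFactorial p ij.2)⁻¹) • (y ^ ij.1 * x ^ ij.2)

lemma y_mul_qExpProdCoeff (hp : ∀ k, qNat p (k + 1) ≠ 0) (n : ℕ) :
    y * qExpProdCoeff p x y n = ∑ ij ∈ antidiagonal (n + 1),
      (qNat p ij.1 * (qFactorial p ij.1)⁻¹ * (qFactorial p ij.2)⁻¹) •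
        (y ^ ij.1 * x ^ ij.2) := by
  rw [Nat.sum_antidiagonal_succ, qNat_zero, zero_mul, zero_mul, zero_smul, zero_add,
    qExpProdCoeff, mul_sum]
  refine sum_congr rfl fun ij _ => ?_
  rw [qNat_mul_inv_qFactorial_succ hp, mul_smul_comm, ← mul_assoc, ← pow_succ']

lemma x_mul_qExpProdCoeff (hp : ∀ k, qNat p (k + 1) ≠ 0) (hxy : x * y = p • (y * x))
    (n : ℕ) :
    x * qExpProdCoeff p x y n = ∑ ij ∈ antidiagonal (n + 1),
      (p ^ ij.1 * qNat p ij.2 * (qFactorial p ij.1)⁻¹ * (qFactorial p ij.2)⁻¹) •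
        (y ^ ij.1 * x ^ ij.2) := by
  rw [Nat.sum_antidiagonal_succ', qNat_zero, mul_zero, zero_mul, zero_mul, zero_smul, zero_add,
    qExpProdCoeff, mul_sum]
  refine sum_congr rfl fun ij _ => ?_
  rw [mul_smul_comm, ← mul_assoc, mul_pow_eq_smul_pow_mul hxy, smul_mul_assoc, smul_smul,
    mul_assoc (y ^ ij.1), ← pow_succ', ← qNat_mul_inv_qFactorial_succ hp ij.2]
  congr 1
  ring

lemma qNat_succ_smul_qExpProdCoeff_succ (hp : ∀ k, qNat p (k + 1) ≠ 0)
    (hxy : x * y = p • (y * x)) (n : ℕ) :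
    qNat p (n + 1) • qExpProdCoeff p x y (n + 1) = (x + y) * qExpProdCoeff p x y n := by
  rw [add_mul, x_mul_qExpProdCoeff hp hxy, y_mul_qExpProdCoeff hp, ← sum_add_distrib,
    qExpProdCoeff, smul_sum]
  refine sum_congr rfl fun ij hij => ?_
  rw [smul_smul, ← add_smul, ← mem_antidiagonal.mp hij, qNat_add]
  congr 1
  ring

theorem inv_qFactorial_smul_add_pow (hp : ∀ k, qNat p (k + 1) ≠ 0)
    (hxy : x * y = p • (y * x)) (n : ℕ) :
    (qFactorial p n)⁻¹ • (x + y) ^ n = qExpProdCoeff p x y n := by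
  induction n with
  | zero => simp [qExpProdCoeff, qFactorial]
  | succ n ih =>
    rw [← inv_smul_smul₀ (hp n) (qExpProdCoeff p x y (n + 1)),
      qNat_succ_smul_qExpProdCoeff_succ hp hxy, ← ih, mul_smul_comm, smul_smul, ← pow_succ',
      qFactorial_succ, mul_inv, mul_comm]

end QBinomial

lemma RatFunc.X_pow_ne_one {K : Type*} [Field K] {m : ℕ} (hm : m ≠ 0) :
    (RatFunc.X : RatFunc K) ^ m ≠ 1 := by
  intro h
  have := congrArg RatFunc.intDegree h
  rw [← RatFunc.algebraMap_X, ← map_pow, RatFunc.intDegree_polynomial, RatFunc.intDegree_one,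
    Polynomial.natDegree_X_pow] at this
  omega

lemma qInt_succ_eq_inv_pow_mul_qNat (k : ℕ) :
    qInt (k + 1) = (RatFunc.X : RatFunc ℚ)⁻¹ ^ k * qNat (RatFunc.X ^ 2) (k + 1) := by
  have hX : (RatFunc.X : RatFunc ℚ) ≠ 0 := RatFunc.X_ne_zero
  have hgeom := geom_sum_mul ((RatFunc.X : RatFunc ℚ) ^ 2) (k + 1)
  have hden : (RatFunc.X : RatFunc ℚ) - (RatFunc.X)⁻¹ ≠ 0 := by
    rw [show (RatFunc.X : RatFunc ℚ) - (RatFunc.X)⁻¹ = (RatFunc.X ^ 2 - 1) / RatFunc.X by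
      field_simp]
    exact div_ne_zero (sub_ne_zero.mpr (RatFunc.X_pow_ne_one two_ne_zero)) hX
  rw [qInt, div_eq_iff hden, qNat]
  simp only [inv_pow]
  field_simp
  linear_combination (-RatFunc.X ^ (k + 1)) * hgeom

lemma qFact_eq_inv_pow_mul_qFactorial (n : ℕ) :
    qFact n =
      (RatFunc.X : RatFunc ℚ)⁻¹ ^ (n * (n - 1) / 2) * qFactorial (RatFunc.X ^ 2) n := by
  rw [qFact, qFactorial, ← sum_range_id, ← prod_pow_eq_pow_sum, ← prod_mul_distrib]
  exact prod_congr rfl fun k _ => qInt_succ_eq_inv_pow_mul_qNat k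

lemma coeff_qExp {A : Type*} [Ring A] [Algebra (RatFunc ℚ) A] (z : A) (n : ℕ) :
    coeff n (qExp z) = (qFactorial ((RatFunc.X : RatFunc ℚ) ^ 2) n)⁻¹ • z ^ n := by
  rw [qExp, coeff_mk, qFact_eq_inv_pow_mul_qFactorial,
    div_mul_cancel_left₀ (pow_ne_zero _ (inv_ne_zero RatFunc.X_ne_zero)), Algebra.smul_def]

/-- **Factorization of the q-exponential.** If `x y = q² y x` in a `ℚ(q)`-algebra `A`
(with `q = X` the transcendental generator), then
`e_q(t y) · e_q(t x) = e_q(t (x + y))` as formal power series in `t`. -/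
theorem qExp_factorization {A : Type*} [Ring A] [Algebra (RatFunc ℚ) A]
    (x y : A)
    (hxy : x * y = algebraMap (RatFunc ℚ) A ((RatFunc.X : RatFunc ℚ) ^ 2) * (y * x)) :
    qExp y * qExp x = qExp (x + y) := by
  have hp (k : ℕ) : qNat ((RatFunc.X : RatFunc ℚ) ^ 2) (k + 1) ≠ 0 :=
    qNat_ne_zero (by rw [← pow_mul]; exact RatFunc.X_pow_ne_one (by omega))
  ext n
  rw [coeff_mul, coeff_qExp, inv_qFactorial_smul_add_pow hp (by rwa [Algebra.smul_def]),
    qExpProdCoeff]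
  refine sum_congr rfl fun ij _ => ?_
  rw [coeff_qExp, coeff_qExp, smul_mul_smul_comm]

end
end

section
/- With S, ψ, χ as above (Sψ = qψS, Sχ = qχS, ψχ = χψ, all invertible), set B = S + ψS⁻¹χ, α = S⁻¹χS⁻¹(1 + ψS⁻¹χS⁻¹)⁻¹, γ = (1 + S⁻¹ψS⁻¹χ)⁻¹S⁻¹ψS⁻¹. Then B²·α = q²·α·B² and B²·γ = q²·γ·B² (i.e., q^β α = q² α q^β and q^β γ = q² γ q^β where q^β = B²). -/
/-!
Say that `x` `q`-commutes with `y` if `x * y = q * (y * x)`. Counting `q`-degrees, each summand of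
`B = S + ψS⁻¹χ` `q`-commutes with `S⁻¹χ` and with `ψS⁻¹`, hence so does `B`, and `B²`
`q²`-commutes with them. As `B = (1 + ψS⁻¹χS⁻¹)S = S(1 + S⁻¹ψS⁻¹χ)`, we have `α = S⁻¹χ B⁻¹` and
`γ = B⁻¹ ψS⁻¹`, and multiplying by `B⁻¹` preserves `q`-commutation with `B`.
-/

def QCommute {A : Type*} [Mul A] (q x y : A) : Prop :=
  x * y = q * (y * x)

namespace QCommute

section Monoid

variable {M : Type*} [Monoid M] {q x y z : M}

theorem mul_commute_right (h : QCommute q x y) (hxz : Commute x z) : QCommute q x (y * z) := by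
  unfold QCommute at *
  rw [← mul_assoc, h, mul_assoc, mul_assoc, hxz.eq, ← mul_assoc y]

theorem commute_mul_right (hxy : Commute x y) (h : QCommute q x z) (hq : Commute q y) :
    QCommute q x (y * z) := by
  unfold QCommute at *
  rw [← mul_assoc, hxy.eq, mul_assoc, h, ← mul_assoc, ← hq.eq, mul_assoc, mul_assoc]

theorem mul_commute_left (h : QCommute q x y) (hzy : Commute z y) : QCommute q (x * z) y := by
  unfold QCommute at *
  rw [mul_assoc, hzy.eq, ← mul_assoc, h, mul_assoc, mul_assoc]

theorem commute_mul_left (hzy : Commute z y) (h : QCommute q x y) (hq : Commute q z) :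
    QCommute q (z * x) y := by
  unfold QCommute at *
  rw [mul_assoc, h, ← mul_assoc, ← hq.eq, mul_assoc, ← mul_assoc z, hzy.eq, mul_assoc]

theorem sq_left (h : QCommute q x y) (hq : Commute q x) : QCommute (q ^ 2) (x ^ 2) y := by
  unfold QCommute at *
  rw [sq, sq, mul_assoc, h, ← mul_assoc, ← hq.eq, mul_assoc, ← mul_assoc x, h]
  simp only [mul_assoc]

theorem swap_units_inv {S : Mˣ} (h : QCommute q S y) (hq : Commute q ↑S⁻¹) :
    QCommute q y ↑S⁻¹ := by
  unfold QCommute at *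
  calc y * ↑S⁻¹ = ↑S⁻¹ * (S * y) * ↑S⁻¹ := by rw [← mul_assoc, S.inv_mul, one_mul]
    _ = q * (↑S⁻¹ * y) := by rw [h, ← mul_assoc, ← hq.eq]; simp only [mul_assoc, S.mul_inv, mul_one]

theorem mul_units_inv_right {X : Mˣ} (h : QCommute q X y) : QCommute q X (y * ↑X⁻¹) := by
  unfold QCommute at *
  rw [← mul_assoc, h, mul_assoc, mul_assoc, X.mul_inv, mul_one, mul_assoc, X.inv_mul, mul_one]

theorem units_inv_mul_right {X : Mˣ} (h : QCommute q X y) (hq : Commute q X) :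
    QCommute q X (↑X⁻¹ * y) := by
  unfold QCommute at *
  calc X * (↑X⁻¹ * y) = ↑X⁻¹ * (X * y) := by rw [X.mul_inv_cancel_left, X.inv_mul_cancel_left]
    _ = q * (↑X⁻¹ * y * X) := by
      rw [h, ← mul_assoc, ← hq.units_inv_right.eq]; simp only [mul_assoc]

end Monoid

theorem add_left {A : Type*} [Distrib A] {q x x' y : A} (h : QCommute q x y)
    (h' : QCommute q x' y) : QCommute q (x + x') y := by
  unfold QCommute at *
  rw [add_mul, h, h', ← mul_add, ← mul_add]

end QCommute

section WeylPair

variable {A : Type*} [Ring A] {q ψ χ : A} {S : Aˣ}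

theorem qCommute_add_inv_mul (hq : ∀ z, Commute q z) (hSψ : QCommute q S ψ)
    (hSχ : QCommute q S χ) (hψχ : Commute ψ χ) :
    QCommute q (S + ψ * ↑S⁻¹ * χ) (↑S⁻¹ * χ) := by
  have hψS : QCommute q ψ ↑S⁻¹ := hSψ.swap_units_inv (hq _)
  refine QCommute.add_left (QCommute.commute_mul_right S.commute_coe_inv hSχ (hq _)) ?_
  rw [mul_assoc]
  exact (hψS.mul_commute_right hψχ).mul_commute_left (Commute.refl _)

theorem qCommute_add_mul_inv (hq : ∀ z, Commute q z) (hSψ : QCommute q S ψ)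
    (hSχ : QCommute q S χ) (hψχ : Commute ψ χ) :
    QCommute q (S + ψ * ↑S⁻¹ * χ) (ψ * ↑S⁻¹) := by
  have hχS : QCommute q χ ↑S⁻¹ := hSχ.swap_units_inv (hq _)
  refine QCommute.add_left (hSψ.mul_commute_right S.commute_coe_inv) ?_
  exact QCommute.commute_mul_left (Commute.refl _) (hχS.commute_mul_right hψχ.symm (hq _)) (hq _)

end WeylPair

/-- `S` plays the role of `q^{φ/2}` and `B` that of `q^{β/2}`. -/
theorem beta_commutation {A : Type*} [Ring A] [Algebra (RatFunc ℚ) A]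
    (q : A) (hq : q = algebraMap (RatFunc ℚ) A (RatFunc.X : RatFunc ℚ))
    (S ψ χ : Aˣ)
    (hSψ : (S : A) * ψ = q * ((ψ : A) * S))
    (hSχ : (S : A) * χ = q * ((χ : A) * S))
    (hψχ : (ψ : A) * χ = (χ : A) * ψ)
    (u₁ : Aˣ) (hu₁ : (u₁ : A) = 1 + (ψ : A) * (S⁻¹ : Aˣ) * χ * (S⁻¹ : Aˣ))
    (u₂ : Aˣ) (hu₂ : (u₂ : A) = 1 + ((S⁻¹ : Aˣ) : A) * ψ * (S⁻¹ : Aˣ) * χ)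
    (B : Aˣ) (hB : (B : A) = (S : A) + (ψ : A) * (S⁻¹ : Aˣ) * χ)
    (α γ : A)
    (hα : α = ((S⁻¹ : Aˣ) : A) * χ * (S⁻¹ : Aˣ) * (u₁⁻¹ : Aˣ))
    (hγ : γ = ((u₂⁻¹ : Aˣ) : A) * (S⁻¹ : Aˣ) * ψ * (S⁻¹ : Aˣ)) :
    ((B : A)) ^ 2 * α = q ^ 2 * (α * ((B : A)) ^ 2) ∧
    ((B : A)) ^ 2 * γ = q ^ 2 * (γ * ((B : A)) ^ 2) := by
  have hqc : ∀ z, Commute q z := fun z => hq ▸ Algebra.commute_algebraMap_left _ z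
  have hB₁ : B = u₁ * S := Units.ext <| by
    rw [hB, Units.val_mul, hu₁, add_mul, one_mul, mul_assoc _ _ (S : A), S.inv_mul, mul_one]
  have hB₂ : B = S * u₂ := Units.ext <| by
    rw [hB, Units.val_mul, hu₂, mul_add, mul_one]
    simp only [mul_assoc, S.mul_inv_cancel_left]
  have hα' : α = ↑S⁻¹ * χ * ↑B⁻¹ := by
    rw [hα, hB₁, mul_inv_rev, Units.val_mul, mul_assoc _ (↑S⁻¹ : A)]
  have hγ' : γ = ↑B⁻¹ * (ψ * ↑S⁻¹) := by
    rw [hγ, hB₂, mul_inv_rev, Units.val_mul]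
    simp only [mul_assoc]
  have hBa : QCommute q B (↑S⁻¹ * χ) := hB ▸ qCommute_add_inv_mul hqc hSψ hSχ hψχ
  have hBb : QCommute q B (ψ * ↑S⁻¹) := hB ▸ qCommute_add_mul_inv hqc hSψ hSχ hψχ
  rw [hα', hγ']
  exact ⟨hBa.mul_units_inv_right.sq_left (hqc _),
    (hBb.units_inv_mul_right (hqc _)).sq_left (hqc _)⟩
end

section
/- With the same setup (Sψ = qψS, Sχ = qχS, ψχ = χψ), the elements α = S⁻¹χS⁻¹(1 + ψS⁻¹χS⁻¹)⁻¹ and γ = (1 + S⁻¹ψS⁻¹χ)⁻¹S⁻¹ψS⁻¹ commute: α·γ = γ·α. -/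
/-!
Put `s = S⁻¹`, `P = ψs` and `C = χs`. Conjugating `Sx = q xS` by `s` gives `xs = q sx` for
`x = ψ, χ`, hence also `Ps = q sP` and `Cs = q sC`, and `PC = q³ s²ψχ = CP`. Now
`1 + ψsχs = 1 + PC` and `1 + sψsχ = s(1 + PC)S`, so with `v = (1 + PC)⁻¹`, which commutes with
`P` and `C`, we get `α = sCv` and `γ = svP`. Moving `s` to the left once on each side,
`αγ = q svs·vCP` and `γα = q svs·vPC`, which agree.
-/

section QCommute

variable {R A : Type*} [CommSemiring R] [Semiring A] [Algebra R A] {r : R}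

theorem mul_units_inv_eq_smul {S : Aˣ} {x : A} (h : S * x = r • (x * S)) :
    x * ↑S⁻¹ = r • (↑S⁻¹ * x) := by
  calc x * ↑S⁻¹ = ↑S⁻¹ * (S * x) * ↑S⁻¹ := by simp [← mul_assoc]
    _ = r • (↑S⁻¹ * x) := by simp [h, mul_assoc]

theorem mul_mul_mul_eq_smul {s x y : A} (hx : x * s = r • (s * x)) (hy : y * s = r • (s * y)) :
    x * s * (y * s) = r ^ 3 • (s * s * (x * y)) := by
  calc x * s * (y * s) = r • (x * s * s * y) := by
        rw [hy, mul_smul_comm]; simp only [mul_assoc]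
    _ = r ^ 2 • (s * (x * s) * y) := by
        conv_lhs => rw [hx]
        simp only [smul_mul_assoc, smul_smul, mul_assoc, pow_two]
    _ = r ^ 3 • (s * s * (x * y)) := by
        rw [hx]
        simp only [smul_mul_assoc, mul_smul_comm, smul_smul, mul_assoc, pow_succ, pow_zero, one_mul]

theorem Commute.mul_mul_of_mul_eq_smul {s x y : A} (hxy : Commute x y)
    (hx : x * s = r • (s * x)) (hy : y * s = r • (s * y)) : Commute (x * s) (y * s) := by
  rw [Commute, SemiconjBy, mul_mul_mul_eq_smul hx hy, mul_mul_mul_eq_smul hy hx, hxy.eq]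

theorem commute_mul_units_inv_of_mul_eq_smul {s p c : A} (u : Aˣ) (hpc : Commute p c)
    (hp : p * s = r • (s * p)) (hc : c * s = r • (s * c)) (hu : (u : A) = 1 + p * c) :
    Commute (s * c * ↑u⁻¹) (s * ↑u⁻¹ * p) := by
  have hvp : Commute ↑u⁻¹ p :=
    (hu ▸ (Commute.one_left p).add_left ((Commute.refl p).mul_left hpc.symm)).units_inv_left
  have hvc : Commute ↑u⁻¹ c :=
    (hu ▸ (Commute.one_left c).add_left (hpc.mul_left (Commute.refl c))).units_inv_left
  set v : A := ↑u⁻¹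
  have hcvp : c * v * p = v * (p * c) := by rw [← hvc.eq, mul_assoc, hpc.eq]
  calc s * c * v * (s * v * p) = s * v * (c * s) * (v * p) := by
        rw [mul_assoc s c v, ← hvc.eq]; simp only [mul_assoc]
    _ = r • (s * v * s * (c * v * p)) := by
        rw [hc]; simp only [smul_mul_assoc, mul_smul_comm, mul_assoc]
    _ = r • (s * v * s * (p * c * v)) := by rw [hcvp, (hvp.mul_right hvc).eq]
    _ = s * v * (p * s) * (c * v) := by
        rw [hp]; simp only [smul_mul_assoc, mul_smul_comm, mul_assoc]
    _ = s * v * p * (s * c * v) := by simp only [mul_assoc]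

end QCommute

/-- The elements `α = S⁻¹χS⁻¹(1 + ψS⁻¹χS⁻¹)⁻¹` and `γ = (1 + S⁻¹ψS⁻¹χ)⁻¹S⁻¹ψS⁻¹`
commute, given `Sψ = qψS`, `Sχ = qχS`, `ψχ = χψ`. -/
theorem alpha_gamma_commute {A : Type*} [Ring A] [Algebra (RatFunc ℚ) A]
    (q : A) (hq : q = algebraMap (RatFunc ℚ) A (RatFunc.X : RatFunc ℚ))
    (S ψ χ : Aˣ)
    (hSψ : (S : A) * ψ = q * ((ψ : A) * S))
    (hSχ : (S : A) * χ = q * ((χ : A) * S))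
    (hψχ : (ψ : A) * χ = (χ : A) * ψ)
    (u₁ : Aˣ) (hu₁ : (u₁ : A) = 1 + (ψ : A) * (S⁻¹ : Aˣ) * χ * (S⁻¹ : Aˣ))
    (u₂ : Aˣ) (hu₂ : (u₂ : A) = 1 + ((S⁻¹ : Aˣ) : A) * ψ * (S⁻¹ : Aˣ) * χ)
    (α γ : A)
    (hα : α = ((S⁻¹ : Aˣ) : A) * χ * (S⁻¹ : Aˣ) * (u₁⁻¹ : Aˣ))
    (hγ : γ = ((u₂⁻¹ : Aˣ) : A) * (S⁻¹ : Aˣ) * ψ * (S⁻¹ : Aˣ)) :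
    α * γ = γ * α := by
  rw [hq, ← Algebra.smul_def] at hSψ hSχ
  have hψ : (ψ : A) * ↑S⁻¹ = (RatFunc.X : RatFunc ℚ) • (↑S⁻¹ * ψ) := mul_units_inv_eq_smul hSψ
  have hχ : (χ : A) * ↑S⁻¹ = (RatFunc.X : RatFunc ℚ) • (↑S⁻¹ * χ) := mul_units_inv_eq_smul hSχ
  have hu₂₁ : u₂ = S⁻¹ * u₁ * S := by
    ext
    simp only [Units.val_mul, hu₂, hu₁, mul_add, add_mul, one_mul, mul_one, mul_assoc, S.inv_mul]
  have hα' : α = ↑S⁻¹ * (χ * ↑S⁻¹) * ↑u₁⁻¹ := by rw [hα, mul_assoc (S⁻¹ : Aˣ).val]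
  have hγ' : γ = ↑S⁻¹ * ↑u₁⁻¹ * (ψ * ↑S⁻¹) := by
    rw [hγ, hu₂₁]
    simp only [mul_inv_rev, inv_inv, Units.val_mul, mul_assoc, S.mul_inv_cancel_left]
  have hP : (ψ : A) * ↑S⁻¹ * ↑S⁻¹ = (RatFunc.X : RatFunc ℚ) • (↑S⁻¹ * (ψ * ↑S⁻¹)) := by
    conv_lhs => rw [hψ]
    rw [smul_mul_assoc, mul_assoc]
  have hC : (χ : A) * ↑S⁻¹ * ↑S⁻¹ = (RatFunc.X : RatFunc ℚ) • (↑S⁻¹ * (χ * ↑S⁻¹)) := by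
    conv_lhs => rw [hχ]
    rw [smul_mul_assoc, mul_assoc]
  have hu : (u₁ : A) = 1 + ψ * ↑S⁻¹ * (χ * ↑S⁻¹) := by rw [hu₁, mul_assoc ((ψ : A) * ↑S⁻¹)]
  rw [hα', hγ']
  exact (commute_mul_units_inv_of_mul_eq_smul u₁
    (Commute.mul_mul_of_mul_eq_smul hψχ hψ hχ) hP hC hu).eq
end

section
/- For integers m ≥ n ≥ 1 and real x > 0, the hypergeometric identity holds: x^{-m} · Γ(m)/(Γ(n)Γ(m−n+1)) · ₂F₁(m, m+1; m−n+1; −1/x) = (−1)^{n+1} n x / (1+x)^{m+n} · ₂F₁(1−m, 1−n; 2; −x). (Note the right-hand side involves a terminating hypergeometric series since 1−m, 1−n are nonpositive integers.) -/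
/-!
Write `n = N + 1` and `c = m - n + 1`, so that `m = c + N`. Gregory–Newton interpolation of
`a ↦ (a)_j` gives the Chu–Vandermonde form `(c + N)_j / (c)_j = ∑_k C(N, k) j^{(k)} / (c)_k`
(`j^{(k)}` the falling factorial), which splits `₂F₁(m, m + 1; m - n + 1; z)` into `N + 1`
shifted binomial series `∑_j j^{(k)} (m + 1)_j / j! zʲ = (m + 1)_k zᵏ / (1 - z)^(m + 1 + k)`.
At `z = -1/x` the left side becomes `x / (1 + x)^(m + n)` times a polynomial in `1 + x`; the right
side carries the same factor in front of the terminating series, a polynomial in `x`.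
Re-expanding in powers of `x`, the coefficients agree because the `J`-th forward difference of
`t ↦ C(t, J + d)` is `t ↦ C(t, d)`.
-/

noncomputable section

/-- Rising factorial (Pochhammer symbol) `(a)_j = a(a+1)⋯(a+j-1)` for a real `a`. -/
def poch (a : ℝ) (j : ℕ) : ℝ := ∏ i ∈ Finset.range j, (a + i)

/-- The Gauss hypergeometric series
`₂F₁(a, b; c; z) = Σ_{j ≥ 0} (a)_j (b)_j / ((c)_j j!) zʲ`
(interpreted as the sum of the series; when the series terminates this is a finite sum). -/
def hypGeom (a b c z : ℝ) : ℝ :=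
  ∑' j : ℕ, poch a j * poch b j / (poch c j * (j.factorial : ℝ)) * z ^ j

open Finset
open scoped Nat

lemma poch_add (a : ℝ) (i k : ℕ) : poch a (i + k) = poch a i * poch (a + i) k := by
  simp only [poch, prod_range_add, Nat.cast_add, add_assoc]

lemma poch_pos {a : ℝ} (ha : 0 < a) (k : ℕ) : 0 < poch a k :=
  prod_pos fun i _ => by positivity

lemma poch_natCast (M j : ℕ) : poch M j = M.ascFactorial j := by
  simp [poch, Nat.ascFactorial_eq_prod_range]

lemma poch_natCast_add_one (M k : ℕ) : poch ((M : ℝ) + 1) k = (M + k)! / M ! := by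
  rw [eq_div_iff (by positivity), ← Nat.cast_succ, poch_natCast, mul_comm]
  exact_mod_cast Nat.factorial_mul_ascFactorial M k

lemma poch_neg_natCast (N : ℕ) : ∀ k, poch (-N) k = (-1) ^ k * N.descFactorial k
  | 0 => by simp [poch]
  | k + 1 => by
    rw [poch, prod_range_succ, ← poch, poch_neg_natCast N k, Nat.descFactorial_succ]
    rcases le_or_gt k N with h | h
    · rw [Nat.cast_mul, Nat.cast_sub h]; ring
    · rw [Nat.descFactorial_eq_zero_iff_lt.mpr h]; simp

lemma poch_add_one_sub_poch (a : ℝ) :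
    ∀ r : ℕ, poch (a + 1) r - poch a r = r * poch (a + 1) (r - 1)
  | 0 => by simp [poch]
  | r + 1 => by
    rw [poch_add (a + 1) r 1, add_comm r 1, poch_add a 1 r]
    simp only [poch, prod_range_one, Nat.cast_zero, add_zero, Nat.add_sub_cancel_left]
    push_cast
    ring

lemma fwdDiff_iter_poch (j : ℕ) : ∀ k : ℕ,
    (fwdDiff (1 : ℝ))^[k] (fun a => poch a j) =
      fun a => (j.descFactorial k : ℝ) * poch (a + k) (j - k)
  | 0 => by simp
  | k + 1 => by
    funext a
    rw [Function.iterate_succ_apply', fwdDiff_iter_poch j k, fwdDiff, Nat.descFactorial_succ,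
      show a + 1 + k = a + k + 1 by ring, ← mul_sub, poch_add_one_sub_poch, Nat.sub_sub]
    push_cast [add_assoc]
    ring

theorem poch_add_natCast (a : ℝ) (N j : ℕ) :
    poch (a + N) j =
      ∑ k ∈ range (N + 1), N.choose k * j.descFactorial k * poch (a + k) (j - k) := by
  simpa [fwdDiff_iter_poch, mul_assoc] using
    shift_eq_sum_fwdDiff_iter (1 : ℝ) (fun a => poch a j) N a

lemma poch_add_natCast_div_poch {c : ℝ} (hc : 0 < c) (N j : ℕ) :
    poch (c + N) j / poch c j =
      ∑ k ∈ range (N + 1), N.choose k * j.descFactorial k / poch c k := by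
  rw [poch_add_natCast, sum_div]
  refine sum_congr rfl fun k _ => ?_
  rcases le_or_gt k j with hkj | hjk
  · have hsplit : poch c j = poch c k * poch (c + k) (j - k) := by
      rw [← poch_add, Nat.add_sub_cancel' hkj]
    have := (poch_pos (a := c + k) (by positivity) (j - k)).ne'
    rw [hsplit]
    field_simp
  · simp [Nat.descFactorial_eq_zero_iff_lt.mpr hjk]

lemma hasSum_descFactorial_mul_poch_mul_pow (b k : ℕ) {z : ℝ} (hz : ‖z‖ < 1) :
    HasSum (fun j => j.descFactorial k * (poch (b + 1) j / j !) * z ^ j)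
      (poch (b + 1) k * z ^ k / (1 - z) ^ (b + 1 + k)) := by
  rw [← hasSum_nat_add_iff' k, sum_eq_zero fun j hj => by
    simp [Nat.descFactorial_eq_zero_iff_lt.mpr (mem_range.mp hj)], sub_zero]
  have hterm : ∀ i : ℕ,
      (i + k).descFactorial k * (poch (b + 1) (i + k) / (i + k)!) * z ^ (i + k) =
        poch (b + 1) k * z ^ k * ((i + (b + k)).choose (b + k) * z ^ i) := by
    intro i
    rw [add_comm i k]
    have hfact : ((k + i)! : ℝ) = i ! * (k + i).descFactorial k := by
      rw [← Nat.factorial_mul_descFactorial (Nat.le_add_right k i), Nat.add_sub_cancel_left]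
      push_cast; rfl
    have hchoose : ((i + (b + k)).choose (b + k) : ℝ) = (b + k + i)! / ((b + k)! * i !) := by
      rw [Nat.cast_choose ℝ (Nat.le_add_left _ _), Nat.add_sub_cancel, add_comm i, mul_comm]
    have : (0 : ℝ) < (k + i).descFactorial k := by
      exact_mod_cast Nat.descFactorial_pos.mpr (Nat.le_add_right k i)
    rw [poch_add, hfact, pow_add, hchoose,
      show (b : ℝ) + 1 + k = (b + k : ℕ) + 1 by push_cast; ring, poch_natCast_add_one (b + k)]
    field_simp
  simp only [hterm]
  have := (hasSum_choose_mul_geometric_of_norm_lt_one (b + k) hz).mul_left (poch (b + 1) k * z ^ k)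
  rwa [mul_one_div, add_right_comm] at this

theorem hypGeom_add_natCast_eq_sum {c : ℝ} (hc : 0 < c) (N b : ℕ) {z : ℝ} (hz : ‖z‖ < 1) :
    hypGeom (c + N) (b + 1) c z =
      ∑ k ∈ range (N + 1),
        N.choose k * poch (b + 1) k / poch c k * z ^ k / (1 - z) ^ (b + 1 + k) := by
  have hsum := hasSum_sum fun k (_ : k ∈ range (N + 1)) =>
    (hasSum_descFactorial_mul_poch_mul_pow b k hz).mul_left (N.choose k / poch c k)
  refine (tsum_congr fun j => ?_).trans (hsum.tsum_eq.trans (sum_congr rfl fun k _ => by ring))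
  rw [mul_div_mul_comm, poch_add_natCast_div_poch hc, sum_mul, sum_mul]
  exact sum_congr rfl fun k _ => by ring

theorem hypGeom_neg_natCast_right (a c z : ℝ) (N : ℕ) :
    hypGeom a (-N) c z =
      ∑ k ∈ range (N + 1), poch a k * poch (-N) k / (poch c k * k !) * z ^ k := by
  refine tsum_eq_sum fun k hk => ?_
  rw [poch_neg_natCast, Nat.descFactorial_eq_zero_iff_lt.mpr (by simpa using hk)]
  simp

lemma neg_one_pow_sub {R : Type*} [Monoid R] [HasDistribNeg R] {i J : ℕ} (h : i ≤ J) :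
    (-1 : R) ^ (J - i) = (-1) ^ J * (-1) ^ i := by
  rw [← pow_sub_mul_pow (-1 : R) h, mul_assoc, ← pow_add, Even.neg_one_pow ⟨i, rfl⟩,
    mul_one]

lemma sum_range_choose_mul_of_le {R : Type*} [Semiring R] {t N : ℕ} (h : t ≤ N)
    (f : ℕ → R) :
    ∑ i ∈ range (N + 1), (t.choose i : R) * f i =
      ∑ i ∈ range (t + 1), (t.choose i : R) * f i := by
  refine (sum_subset (range_subset_range.mpr (by omega)) fun i _ hi => ?_).symm
  rw [Nat.choose_eq_zero_of_lt (by simpa using hi), Nat.cast_zero, zero_mul]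

lemma Nat.choose_mul_choose_sub_comm (N i k : ℕ) :
    N.choose i * (N - i).choose k = N.choose k * (N - k).choose i := by
  have hi := choose_mul (n := N) (le_add_right i k)
  have hk := choose_mul (n := N) (le_add_left k i)
  rw [Nat.add_sub_cancel_left] at hi
  rw [Nat.add_sub_cancel] at hk
  rw [← hi, ← hk, choose_symm_add]

theorem sum_choose_mul_neg_one_pow_mul_choose_add (J d M : ℕ) :
    ∑ i ∈ range (J + 1), (J.choose i : ℤ) * ((-1) ^ i * (M + i).choose (J + d)) =
      (-1) ^ J * M.choose d := by
  have h := fwdDiff_iter_eq_sum_shift 1 (fun t : ℕ => ((t.choose (J + d) : ℕ) : ℤ)) J M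
  simp only [fwdDiff_iter_choose, smul_eq_mul, mul_one] at h
  rw [h, mul_sum]
  refine sum_congr rfl fun i hi => ?_
  rw [neg_one_pow_sub (Nat.lt_succ_iff.mp (mem_range.mp hi))]
  linear_combination (-((-1) ^ i * J.choose i * (M + i).choose (J + d) : ℤ)) *
    (Even.neg_one_pow ⟨J, rfl⟩ : (-1 : ℤ) ^ (J + J) = 1)

theorem sum_neg_one_pow_mul_choose_mul_choose_mul_one_add_pow {R : Type*} [CommRing R]
    (N m : ℕ) (x : R) :
    ∑ i ∈ range (N + 1), (-1) ^ i * N.choose i * (m + i).choose (N + 1) * (1 + x) ^ (N - i) =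
      ∑ k ∈ range (N + 1), (-1) ^ (N - k) * N.choose k * m.choose (k + 1) * x ^ k := by
  have hcoeff : ∀ k ∈ range (N + 1), ∑ i ∈ range (N + 1),
      (-1 : ℤ) ^ i * N.choose i * (m + i).choose (N + 1) * (N - i).choose k =
        (-1) ^ (N - k) * N.choose k * m.choose (k + 1) := by
    intro k hk
    have hkN : k ≤ N := Nat.lt_succ_iff.mp (mem_range.mp hk)
    calc _ = N.choose k * ∑ i ∈ range (N + 1),
          ((N - k).choose i : ℤ) * ((-1) ^ i * (m + i).choose (N - k + (k + 1))) := by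
          rw [mul_sum, show N - k + (k + 1) = N + 1 by omega]
          refine sum_congr rfl fun i _ => ?_
          have := congrArg (Nat.cast : ℕ → ℤ) (Nat.choose_mul_choose_sub_comm N i k)
          push_cast at this
          linear_combination ((-1) ^ i * ((m + i).choose (N + 1) : ℤ)) * this
      _ = _ := by
          rw [sum_range_choose_mul_of_le (by omega), sum_choose_mul_neg_one_pow_mul_choose_add]
          ring
  have hexpand : ∀ i ∈ range (N + 1),
      (1 + x) ^ (N - i) = ∑ k ∈ range (N + 1), (N - i).choose k * x ^ k := by
    intro i _
    rw [sum_range_choose_mul_of_le (Nat.sub_le N i), add_comm, add_pow]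
    exact sum_congr rfl fun k _ => by rw [one_pow, mul_one, mul_comm]
  rw [sum_congr rfl fun i hi => by rw [hexpand i hi, mul_sum], sum_comm]
  refine sum_congr rfl fun k hk => ?_
  have := congrArg (Int.cast : ℤ → R) (hcoeff k hk)
  push_cast at this
  rw [← this, sum_mul]
  exact sum_congr rfl fun i _ => by ring

lemma Gamma_div_mul_poch_div_poch {m n : ℕ} (hn : 1 ≤ n) (hm : n ≤ m) (k : ℕ) :
    Real.Gamma m / (Real.Gamma n * Real.Gamma ((m : ℝ) - n + 1)) *
        (poch ((m : ℝ) + 1) k / poch ((m : ℝ) - n + 1) k) = n / m * (m + k).choose n := by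
  obtain ⟨N, rfl⟩ : ∃ N, n = N + 1 := ⟨n - 1, by omega⟩
  obtain ⟨c, rfl⟩ := Nat.exists_eq_add_of_le hm
  rw [show ((N + 1 + c : ℕ) : ℝ) - (N + 1 : ℕ) + 1 = (c : ℝ) + 1 by push_cast; ring,
    show ((N + 1 + c : ℕ) : ℝ) = (N + c : ℕ) + 1 by push_cast; ring, Nat.cast_succ N,
    Real.Gamma_nat_eq_factorial, Real.Gamma_nat_eq_factorial, Real.Gamma_nat_eq_factorial,
    ← Nat.cast_succ, poch_natCast_add_one, poch_natCast_add_one,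
    Nat.cast_choose ℝ (by omega : N + 1 ≤ N + 1 + c + k),
    show N + 1 + c + k - (N + 1) = c + k by omega, show (N + c).succ + k = N + 1 + c + k by omega,
    Nat.factorial_succ (N + c), Nat.factorial_succ N]
  push_cast
  field_simp

lemma poch_neg_natCast_mul_poch_neg_natCast_div (M N k : ℕ) :
    poch (-M) k * poch (-N) k / (poch 2 k * k !) = M.choose k * N.choose k / (k + 1) := by
  rw [poch_neg_natCast, poch_neg_natCast, Nat.descFactorial_eq_factorial_mul_choose,
    Nat.descFactorial_eq_factorial_mul_choose, show (2 : ℝ) = (1 : ℕ) + 1 by norm_num,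
    poch_natCast_add_one, add_comm 1 k, Nat.factorial_succ, Nat.factorial_one, Nat.cast_one,
    div_one, mul_mul_mul_comm, ← mul_pow, neg_one_mul, neg_neg, one_pow, one_mul]
  push_cast
  field_simp

lemma mutation_lhs_eq {m N : ℕ} (hm : N + 1 ≤ m) {x : ℝ} (hx : 1 < x) :
    x ^ (-(m : ℝ)) *
        (Real.Gamma m / (Real.Gamma (N + 1 : ℕ) * Real.Gamma ((m : ℝ) - (N + 1 : ℕ) + 1))) *
        hypGeom m ((m : ℝ) + 1) ((m : ℝ) - (N + 1 : ℕ) + 1) (-1 / x) =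
      (N + 1 : ℕ) / m * x / (1 + x) ^ (m + (N + 1)) *
        ∑ k ∈ range (N + 1),
          (-1) ^ k * N.choose k * (m + k).choose (N + 1) * (1 + x) ^ (N - k) := by
  have hx0 : 0 < x := by linarith
  have hc : (0 : ℝ) < m - (N + 1 : ℕ) + 1 := by
    have : ((N + 1 : ℕ) : ℝ) ≤ m := by exact_mod_cast hm
    linarith
  have hz : ‖-1 / x‖ < 1 := by
    rwa [norm_div, norm_neg, norm_one, Real.norm_of_nonneg hx0.le, div_lt_one hx0]
  have hseries := hypGeom_add_natCast_eq_sum hc N m hz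
  rw [show (m : ℝ) - (N + 1 : ℕ) + 1 + N = m by push_cast; ring] at hseries
  rw [hseries, mul_sum, mul_sum]
  refine sum_congr rfl fun k hk => ?_
  have hkN : k ≤ N := Nat.lt_succ_iff.mp (mem_range.mp hk)
  have hpow : x ^ (-(m : ℝ)) * (-1 / x) ^ k / (1 - -1 / x) ^ (m + 1 + k) =
      (-1) ^ k * x * (1 + x) ^ (N - k) / (1 + x) ^ (m + (N + 1)) := by
    have h1 : 1 - -1 / x = (1 + x) / x := by field_simp; ring
    rw [Real.rpow_neg hx0.le, Real.rpow_natCast, h1, div_pow, div_pow, pow_add x,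
      show m + (N + 1) = m + 1 + k + (N - k) by omega, pow_add (1 + x) (m + 1 + k)]
    field_simp
    ring
  set G := Real.Gamma m / (Real.Gamma (N + 1 : ℕ) * Real.Gamma ((m : ℝ) - (N + 1 : ℕ) + 1))
  calc _ = N.choose k * (G * (poch ((m : ℝ) + 1) k / poch ((m : ℝ) - (N + 1 : ℕ) + 1) k)) *
        (x ^ (-(m : ℝ)) * (-1 / x) ^ k / (1 - -1 / x) ^ (m + 1 + k)) := by ring
    _ = _ := by
      rw [Gamma_div_mul_poch_div_poch (by omega) hm, hpow]
      push_cast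
      ring

lemma mutation_rhs_eq {m : ℕ} (hm : 0 < m) (N : ℕ) (x : ℝ) :
    (-1 : ℝ) ^ (N + 1 + 1) * (N + 1 : ℕ) * x / (1 + x) ^ (m + (N + 1)) *
        hypGeom (1 - (m : ℝ)) (1 - ((N + 1 : ℕ) : ℝ)) 2 (-x) =
      (N + 1 : ℕ) / m * x / (1 + x) ^ (m + (N + 1)) *
        ∑ k ∈ range (N + 1), (-1) ^ (N - k) * N.choose k * m.choose (k + 1) * x ^ k := by
  obtain ⟨M, rfl⟩ : ∃ M, m = M + 1 := ⟨m - 1, by omega⟩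
  rw [show (1 : ℝ) - ((M + 1 : ℕ) : ℝ) = -M by push_cast; ring,
    show (1 : ℝ) - ((N + 1 : ℕ) : ℝ) = -N by push_cast; ring, hypGeom_neg_natCast_right,
    mul_sum, mul_sum]
  refine sum_congr rfl fun k hk => ?_
  have hchoose : ((M + 1).choose (k + 1) : ℝ) = (M + 1) * M.choose k / (k + 1) := by
    rw [eq_div_iff (by positivity)]
    exact_mod_cast (Nat.add_one_mul_choose_eq M k).symm
  rw [poch_neg_natCast_mul_poch_neg_natCast_div, hchoose,
    neg_one_pow_sub (Nat.lt_succ_iff.mp (mem_range.mp hk)), neg_pow, pow_succ, pow_succ]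
  push_cast
  field_simp
  ring

/-- The hypergeometric identity arising from the matrix elements of the quantum
mutation equation (at `q = 1`): for integers `m ≥ n ≥ 1` and real `x` in the common
domain of convergence (`x > 1`),
`x^{-m} Γ(m)/(Γ(n)Γ(m−n+1)) ₂F₁(m, m+1; m−n+1; −1/x)
  = (−1)^{n+1} n x / (1+x)^{m+n} ₂F₁(1−m, 1−n; 2; −x)`. -/
theorem hypergeometric_mutation_identity (m n : ℕ) (hn : 1 ≤ n) (hm : n ≤ m)
    (x : ℝ) (hx : 1 < x) :
    x ^ (-(m : ℝ)) * (Real.Gamma m / (Real.Gamma n * Real.Gamma ((m : ℝ) - n + 1))) *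
        hypGeom m ((m : ℝ) + 1) ((m : ℝ) - n + 1) (-1 / x) =
      (-1 : ℝ) ^ (n + 1) * n * x / (1 + x) ^ (m + n) *
        hypGeom (1 - (m : ℝ)) (1 - (n : ℝ)) 2 (-x) := by
  obtain ⟨N, rfl⟩ : ∃ N, n = N + 1 := ⟨n - 1, by omega⟩
  rw [mutation_lhs_eq hm hx, mutation_rhs_eq (by omega) N x,
    sum_neg_one_pow_mul_choose_mul_choose_mul_one_add_pow]

end
end
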